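/- arXiv:2407.20918 — 8 statements merged into one kernel-verified Lean document; each statement's English description precedes it below -/
import Mathlib

section
/- Let Ω be a nonempty finite type and let E = ⟨𝓔, mod⟩ be an epistemic space over Ω. Then AGM contraction is realizable in E (i.e., there exists an AGM contraction operator for E) if and only if E satisfies (ZC). -/
open Set

/-- `minSet r S` is the set of `r`-minimal elements of `S`:
`min(S, r) = {ω ∈ S : r ω ω' for all ω' ∈ S}`. -/
def minSet {Ω : Type*} (r : Ω → Ω → Prop) (S : Set Ω) : Set Ω :=
  {ω ∈ S | ∀ ω' ∈ S, r ω ω'}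

/-- A linear order as a relation: total, antisymmetric and transitive. -/
def IsLinRel {Ω : Type*} (r : Ω → Ω → Prop) : Prop :=
  (∀ a b, r a b ∨ r b a) ∧ (∀ a b, r a b → r b a → a = b) ∧
    (∀ a b c, r a b → r b c → r a c)

/-- AGM contraction operator for the epistemic space `⟨E, md⟩` (postulates C1–C7,
formulated on model sets). -/
def IsContraction {Ω E : Type*} (md : E → Set Ω) (c : E → Set Ω → E) : Prop :=
  ∀ (Ψ : E) (A B : Set Ω),
    md Ψ ⊆ md (c Ψ A) ∧
    (¬ md Ψ ⊆ A → md (c Ψ A) ⊆ md Ψ) ∧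
    (A ≠ Set.univ → ¬ md (c Ψ A) ⊆ A) ∧
    md (c Ψ A) ∩ A ⊆ md Ψ ∧
    md (c Ψ (A ∩ B)) ⊆ md (c Ψ A) ∪ md (c Ψ B) ∧
    (¬ md (c Ψ (A ∩ B)) ⊆ B → md (c Ψ B) ⊆ md (c Ψ (A ∩ B)))

/-- AGM revision operator for the epistemic space `⟨E, md⟩` (postulates R1–R6,
formulated on model sets). -/
def IsRevision {Ω E : Type*} (md : E → Set Ω) (s : E → Set Ω → E) : Prop :=
  ∀ (Ψ : E) (A B : Set Ω),
    md (s Ψ A) ⊆ A ∧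
    (md Ψ ∩ A ≠ ∅ → md (s Ψ A) = md Ψ ∩ A) ∧
    (A ≠ ∅ → md (s Ψ A) ≠ ∅) ∧
    md (s Ψ A) ∩ B ⊆ md (s Ψ (A ∩ B)) ∧
    (md (s Ψ A) ∩ B ≠ ∅ → md (s Ψ (A ∩ B)) ⊆ md (s Ψ A) ∩ B)

/-- Postulate (ZC). -/
def ZC {Ω E : Type*} (md : E → Set Ω) : Prop :=
  ∀ (Ψ : E) (M : Set Ω), md Ψ ⊆ M → ∃ Ψ' : E, md Ψ' = M

/-- Postulate (ZR1). -/
def ZR1 {Ω E : Type*} (md : E → Set Ω) : Prop :=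
  ∀ ω : Ω, ∃ Ψ : E, md Ψ = {ω}

/-- Postulate (ZR2). -/
def ZR2 {Ω E : Type*} (md : E → Set Ω) : Prop :=
  ∀ (Ψ : E) (M : Set Ω), M ⊆ md Ψ → ∃ Ψ' : E, md Ψ' = M

/-- Postulate (Unbiased). -/
def Unbiased {Ω E : Type*} (md : E → Set Ω) : Prop :=
  ∀ M : Set Ω, ∃ Ψ : E, md Ψ = M

/-- Maxichoice contraction operator. -/
def IsMaxichoiceContraction {Ω E : Type*} (md : E → Set Ω) (c : E → Set Ω → E) : Prop :=
  IsContraction md c ∧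
    ∀ Ψ : E, ∃ r : Ω → Ω → Prop, IsLinRel r ∧ ∀ A : Set Ω,
      (¬ md Ψ ⊆ A → md (c Ψ A) = md Ψ) ∧
      (md Ψ ⊆ A → md (c Ψ A) = md Ψ ∪ minSet r Aᶜ)

/-- Linear contraction operator: a maxichoice contraction operator based on one
single linear order for all epistemic states. -/
def IsLinearContraction {Ω E : Type*} (md : E → Set Ω) (c : E → Set Ω → E) : Prop :=
  IsContraction md c ∧
    ∃ r : Ω → Ω → Prop, IsLinRel r ∧ ∀ (Ψ : E) (A : Set Ω),
      (¬ md Ψ ⊆ A → md (c Ψ A) = md Ψ) ∧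
      (md Ψ ⊆ A → md (c Ψ A) = md Ψ ∪ minSet r Aᶜ)

/-- Full meet contraction operator. -/
def IsFullMeetContraction {Ω E : Type*} (md : E → Set Ω) (c : E → Set Ω → E) : Prop :=
  IsContraction md c ∧
    ∀ (Ψ : E) (A : Set Ω),
      (¬ md Ψ ⊆ A → md (c Ψ A) = md Ψ) ∧
      (md Ψ ⊆ A → md (c Ψ A) = md Ψ ∪ Aᶜ)

/-- Maxichoice revision operator. -/
def IsMaxichoiceRevision {Ω E : Type*} (md : E → Set Ω) (s : E → Set Ω → E) : Prop :=
  IsRevision md s ∧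
    ∀ Ψ : E, ∃ r : Ω → Ω → Prop, IsLinRel r ∧ ∀ A : Set Ω,
      (md Ψ ∩ A ≠ ∅ → md (s Ψ A) = md Ψ ∩ A) ∧
      (md Ψ ∩ A = ∅ → md (s Ψ A) = minSet r A)

/-- Linear revision operator: a maxichoice revision operator based on one single
linear order for all epistemic states. -/
def IsLinearRevision {Ω E : Type*} (md : E → Set Ω) (s : E → Set Ω → E) : Prop :=
  IsRevision md s ∧
    ∃ r : Ω → Ω → Prop, IsLinRel r ∧ ∀ (Ψ : E) (A : Set Ω),
      (md Ψ ∩ A ≠ ∅ → md (s Ψ A) = md Ψ ∩ A) ∧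
      (md Ψ ∩ A = ∅ → md (s Ψ A) = minSet r A)

/-- Full meet revision operator. -/
def IsFullMeetRevision {Ω E : Type*} (md : E → Set Ω) (s : E → Set Ω → E) : Prop :=
  IsRevision md s ∧
    ∀ (Ψ : E) (A : Set Ω),
      (md Ψ ∩ A ≠ ∅ → md (s Ψ A) = md Ψ ∩ A) ∧
      (md Ψ ∩ A = ∅ → md (s Ψ A) = A)


lemma minSet_subset' {Ω : Type*} (r : Ω → Ω → Prop) (S : Set Ω) : minSet r S ⊆ S :=
  fun _ hx => hx.1

lemma minSet_union_subset' {Ω : Type*} (r : Ω → Ω → Prop) (S T : Set Ω) :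
    minSet r (S ∪ T) ⊆ minSet r S ∪ minSet r T := by
  rintro x ⟨hxst, hmin⟩
  rcases hxst with hx | hx
  · exact Or.inl ⟨hx, fun y hy => hmin y (Or.inl hy)⟩
  · exact Or.inr ⟨hx, fun y hy => hmin y (Or.inr hy)⟩

/-- AGM contraction is realizable in the epistemic space `⟨E, md⟩`
iff `⟨E, md⟩` satisfies (ZC). -/
theorem contraction_realizable_iff_ZC {Ω E : Type*} [Fintype Ω] [Nonempty Ω] [Nonempty E]
    (md : E → Set Ω) :
    (∃ c : E → Set Ω → E, IsContraction md c) ↔ ZC md := by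
  constructor
  · rintro ⟨c, hc⟩ Ψ M hM
    -- contracting by {ω}ᶜ adds exactly ω to the model set
    have key : ∀ (Φ : E) (ω : Ω), md (c Φ {ω}ᶜ) = md Φ ∪ {ω} := by
      intro Φ ω
      obtain ⟨h1, h2, h3, h4, -, -⟩ := hc Φ {ω}ᶜ ∅
      by_cases hω : ω ∈ md Φ
      · have hns : ¬ md Φ ⊆ {ω}ᶜ := fun h => (h hω) rfl
        have heq : md (c Φ {ω}ᶜ) = md Φ := subset_antisymm (h2 hns) h1
        rw [heq]
        exact (union_eq_self_of_subset_right (by simpa using hω)).symm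
      · have hA : ({ω}ᶜ : Set Ω) ≠ univ := by
          intro h
          have : ω ∈ ({ω}ᶜ : Set Ω) := h ▸ mem_univ ω
          exact this rfl
        apply subset_antisymm
        · intro x hx
          by_cases hxω : x = ω
          · exact Or.inr (by simp [hxω])
          · exact Or.inl (h4 ⟨hx, by simpa using hxω⟩)
        · rintro x (hx | hx)
          · exact h1 hx
          · -- x = ω; by C3 some element of md (c Φ {ω}ᶜ) is outside {ω}ᶜ, i.e. equals ω
            obtain ⟨y, hy, hy2⟩ := not_subset.mp (h3 hA)
            have hyo : y = ω := by simpa using hy2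
            have hxy : x = ω := hx
            rw [hyo] at hy
            rw [hxy]; exact hy
    have main : ∀ S : Set Ω, ∃ Ψ', md Ψ' = md Ψ ∪ S := by
      intro S
      refine Set.Finite.induction_on (motive := fun S _ => ∃ Ψ', md Ψ' = md Ψ ∪ S) S (Set.toFinite S) ⟨Ψ, by simp⟩ ?_
      intro a s _ _ ih
      obtain ⟨Φ, hΦ⟩ := ih
      refine ⟨c Φ {a}ᶜ, ?_⟩
      rw [key Φ a, hΦ, Set.insert_eq]
      ac_rfl
    obtain ⟨Ψ', hΨ'⟩ := main M
    exact ⟨Ψ', by rw [hΨ', union_eq_self_of_subset_left hM]⟩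
  · intro hzc
    -- build a linear relation on Ω from an equivalence with Fin n
    obtain e := Fintype.equivFin Ω
    set r : Ω → Ω → Prop := fun a b => e a ≤ e b with hr_def
    have hr_total : ∀ a b, r a b ∨ r b a := fun a b => le_total _ _
    have hr_antisym : ∀ a b, r a b → r b a → a = b := fun a b h1 h2 =>
      e.injective (le_antisymm h1 h2)
    have hr_trans : ∀ a b c, r a b → r b c → r a c := fun a b c h1 h2 => le_trans h1 h2
    -- each nonempty set has an r-minimal element, and minSet is then a singleton
    have hmin : ∀ S : Set Ω, S.Nonempty → ∃ ℓ, ℓ ∈ minSet r S ∧ minSet r S = {ℓ} := by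
      intro S hS
      obtain ⟨ℓ, hℓS, hℓmin⟩ := Set.exists_min_image S (fun x => e x) (Set.toFinite S) hS
      refine ⟨ℓ, ⟨hℓS, hℓmin⟩, ?_⟩
      apply subset_antisymm
      · rintro x ⟨hxS, hxmin⟩
        exact hr_antisym x ℓ (hxmin ℓ hℓS) (hℓmin x hxS)
      · rintro x hx
        rw [hx]; exact ⟨hℓS, hℓmin⟩
    -- define the contraction operator using ZC
    choose f hf using fun (Ψ : E) (A : Set Ω) =>
      hzc Ψ (md Ψ ∪ minSet r Aᶜ) subset_union_left
    classical
    refine ⟨fun Ψ A => if md Ψ ⊆ A then f Ψ A else Ψ, ?_⟩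
    have mdc : ∀ (Ψ : E) (A : Set Ω),
        md (if md Ψ ⊆ A then f Ψ A else Ψ) =
          if md Ψ ⊆ A then md Ψ ∪ minSet r Aᶜ else md Ψ := by
      intro Ψ A
      by_cases h : md Ψ ⊆ A <;> simp [h, hf]
    intro Ψ A B
    refine ⟨?_, ?_, ?_, ?_, ?_, ?_⟩
    · -- C1
      rw [mdc]
      by_cases h : md Ψ ⊆ A <;> simp [h]
    · -- C2
      intro h
      rw [mdc, if_neg h]
    · -- C3
      intro hA
      rw [mdc]
      by_cases h : md Ψ ⊆ A
      · rw [if_pos h]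
        have hAc : (Aᶜ : Set Ω).Nonempty := by
          rw [nonempty_compl]; exact hA
        obtain ⟨ℓ, hℓ, -⟩ := hmin Aᶜ hAc
        intro hsub
        exact (minSet_subset' r Aᶜ hℓ) (hsub (Or.inr hℓ))
      · rw [if_neg h]; exact h
    · -- C4
      rw [mdc]
      by_cases h : md Ψ ⊆ A
      · rw [if_pos h]
        rintro x ⟨hx | hx, hxA⟩
        · exact hx
        · exact absurd hxA (minSet_subset' r Aᶜ hx)
      · rw [if_neg h]
        exact fun x hx => hx.1
    · -- C6
      rw [mdc, mdc, mdc]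
      by_cases hAB : md Ψ ⊆ A ∩ B
      · have hA : md Ψ ⊆ A := hAB.trans inter_subset_left
        have hB : md Ψ ⊆ B := hAB.trans inter_subset_right
        rw [if_pos hAB, if_pos hA, if_pos hB]
        rintro x (hx | hx)
        · exact Or.inl (Or.inl hx)
        · rw [compl_inter] at hx
          rcases minSet_union_subset' r Aᶜ Bᶜ hx with h | h
          · exact Or.inl (Or.inr h)
          · exact Or.inr (Or.inr h)
      · rw [if_neg hAB]
        intro x hx
        by_cases hA : md Ψ ⊆ A
        · exact Or.inl (by rw [if_pos hA]; exact Or.inl hx)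
        · exact Or.inl (by rw [if_neg hA]; exact hx)
    · -- C7
      intro hnb
      rw [mdc] at hnb ⊢
      rw [mdc]
      by_cases hAB : md Ψ ⊆ A ∩ B
      · have hB : md Ψ ⊆ B := hAB.trans inter_subset_right
        rw [if_pos hAB] at hnb
        rw [if_pos hAB, if_pos hB]
        -- the offending element lies in minSet r (A ∩ B)ᶜ and outside B
        obtain ⟨ℓ, hℓmem, hℓB⟩ := not_subset.mp hnb
        have hℓmin : ℓ ∈ minSet r (A ∩ B)ᶜ := by
          rcases hℓmem with h | h
          · exact absurd (hB h) hℓB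
          · exact h
        apply union_subset_union_right
        rintro x ⟨hxBc, hxmin⟩
        have hxc : x ∈ ((A ∩ B)ᶜ : Set Ω) := fun hx => hxBc hx.2
        have h1 : r x ℓ := hxmin ℓ hℓB
        have h2 : r ℓ x := hℓmin.2 x hxc
        have : x = ℓ := hr_antisym x ℓ h1 h2
        rw [this]; exact hℓmin
      · rw [if_neg hAB] at hnb
        have hB : ¬ md Ψ ⊆ B := hnb
        rw [if_neg hAB, if_neg hB]
end

section
/- Let Ω be a nonempty finite type and let E = ⟨𝓔, mod⟩ be an epistemic space over Ω. If E satisfies (ZC), then there exists a full meet contraction operator for E. -/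
open Set

/-!
The full meet result always contains `mod(Ψ)`, so (ZC) provides a state realising it for every
`Ψ` and `A`; choosing one gives the operator, and each contraction postulate is then a
set inclusion about the model set `fullMeetModels (mod Ψ) A`.
-/

open Classical in
noncomputable def fullMeetModels {Ω : Type*} (K A : Set Ω) : Set Ω :=
  if K ⊆ A then K ∪ Aᶜ else K

section fullMeetModels

variable {Ω : Type*} {K A B : Set Ω}

theorem fullMeetModels_of_subset (h : K ⊆ A) : fullMeetModels K A = K ∪ Aᶜ :=
  if_pos h

theorem fullMeetModels_of_not_subset (h : ¬K ⊆ A) : fullMeetModels K A = K :=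
  if_neg h

theorem subset_fullMeetModels : K ⊆ fullMeetModels K A := by
  by_cases h : K ⊆ A
  · rw [fullMeetModels_of_subset h]; exact subset_union_left
  · rw [fullMeetModels_of_not_subset h]

theorem fullMeetModels_subset_of_not_subset (h : ¬K ⊆ A) : fullMeetModels K A ⊆ K :=
  (fullMeetModels_of_not_subset h).subset

theorem not_fullMeetModels_subset (hA : A ≠ univ) : ¬fullMeetModels K A ⊆ A := by
  intro hsub
  by_cases h : K ⊆ A
  · obtain ⟨x, hx⟩ := nonempty_compl.2 hA
    rw [fullMeetModels_of_subset h] at hsub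
    exact hx (hsub (Or.inr hx))
  · exact h (subset_fullMeetModels.trans hsub)

theorem fullMeetModels_inter_subset : fullMeetModels K A ∩ A ⊆ K := by
  by_cases h : K ⊆ A
  · rw [fullMeetModels_of_subset h, union_inter_distrib_right, compl_inter_self, union_empty]
    exact inter_subset_left
  · rw [fullMeetModels_of_not_subset h]; exact inter_subset_left

theorem fullMeetModels_inter_subset_union :
    fullMeetModels K (A ∩ B) ⊆ fullMeetModels K A ∪ fullMeetModels K B := by
  by_cases h : K ⊆ A ∩ B
  · rw [fullMeetModels_of_subset h, fullMeetModels_of_subset (h.trans inter_subset_left),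
      fullMeetModels_of_subset (h.trans inter_subset_right), compl_inter]
    exact union_subset (subset_union_left.trans subset_union_left)
      (union_subset_union subset_union_right subset_union_right)
  · rw [fullMeetModels_of_not_subset h]
    exact subset_fullMeetModels.trans subset_union_left

theorem fullMeetModels_subset_inter (h : ¬fullMeetModels K (A ∩ B) ⊆ B) :
    fullMeetModels K B ⊆ fullMeetModels K (A ∩ B) := by
  by_cases hAB : K ⊆ A ∩ B
  · rw [fullMeetModels_of_subset hAB, fullMeetModels_of_subset (hAB.trans inter_subset_right),
      compl_inter]
    exact union_subset_union_right K subset_union_right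
  · rw [fullMeetModels_of_not_subset hAB] at h ⊢
    exact fullMeetModels_subset_of_not_subset h

end fullMeetModels

theorem isFullMeetContraction_of_md_eq {Ω E : Type*} {md : E → Set Ω} {c : E → Set Ω → E}
    (hc : ∀ Ψ A, md (c Ψ A) = fullMeetModels (md Ψ) A) : IsFullMeetContraction md c := by
  refine ⟨fun Ψ A B => ?_, fun Ψ A => ?_⟩
  · simp only [hc]
    exact ⟨subset_fullMeetModels, fullMeetModels_subset_of_not_subset, not_fullMeetModels_subset,
      fullMeetModels_inter_subset, fullMeetModels_inter_subset_union, fullMeetModels_subset_inter⟩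
  · rw [hc]
    exact ⟨fullMeetModels_of_not_subset, fullMeetModels_of_subset⟩

theorem exists_fullMeetContraction_of_ZC_general {Ω E : Type*}
    (md : E → Set Ω)
    (hZC : ZC md) :
    ∃ c : E → Set Ω → E, IsFullMeetContraction md c := by
  choose c hc using fun Ψ A => hZC Ψ (fullMeetModels (md Ψ) A) subset_fullMeetModels
  exact ⟨c, isFullMeetContraction_of_md_eq hc⟩

/-- If `⟨E, md⟩` satisfies (ZC), then there exists a full meet
contraction operator for `⟨E, md⟩`. -/
theorem exists_fullMeetContraction_of_ZC {Ω E : Type*} [Fintype Ω] [Nonempty Ω] [Nonempty E]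
    (md : E → Set Ω)
    (hZC : ZC md) :
    ∃ c : E → Set Ω → E, IsFullMeetContraction md c :=
  exists_fullMeetContraction_of_ZC_general md hZC
end

section
/- Let Ω be a nonempty finite type and let E = ⟨𝓔, mod⟩ be an epistemic space over Ω. The following statements are equivalent: (I) AGM contraction is realizable in E; (II) there exists a linear contraction operator for E; (III) there exists a maxichoice contraction operator for E; (IV) there exists a full meet contraction operator for E. -/
open Set

section Aux

variable {Ω E : Type*}

lemma minSet_nonempty [Fintype Ω] {r : Ω → Ω → Prop} (hr : IsLinRel r) {S : Set Ω}
    (hS : S.Nonempty) : (minSet r S).Nonempty := by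
  classical
  have key : ∀ F : Finset Ω, F.Nonempty → ∃ m ∈ F, ∀ x ∈ F, r m x := by
    intro F
    induction F using Finset.induction_on with
    | empty => intro h; simp at h
    | @insert a F ha ih =>
      intro _
      rcases F.eq_empty_or_nonempty with h | h
      · subst h
        refine ⟨a, by simp, ?_⟩
        intro x hx
        simp only [Finset.mem_insert, Finset.notMem_empty, or_false] at hx
        subst hx
        rcases hr.1 x x with h | h <;> exact h
      · obtain ⟨m, hm, hmin⟩ := ih h
        rcases hr.1 m a with h1 | h1
        · refine ⟨m, Finset.mem_insert_of_mem hm, ?_⟩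
          intro x hx
          rcases Finset.mem_insert.mp hx with rfl | hx
          · exact h1
          · exact hmin x hx
        · refine ⟨a, Finset.mem_insert_self a F, ?_⟩
          intro x hx
          rcases Finset.mem_insert.mp hx with rfl | hx
          · rcases hr.1 x x with h | h <;> exact h
          · exact hr.2.2 a m x h1 (hmin x hx)
  obtain ⟨m, hm, hmin⟩ := key S.toFinset (by rwa [Set.toFinset_nonempty])
  exact ⟨m, Set.mem_toFinset.mp hm, fun y hy => hmin y (Set.mem_toFinset.mpr hy)⟩

lemma minSet_union {r : Ω → Ω → Prop} (S T : Set Ω) :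
    minSet r (S ∪ T) ⊆ minSet r S ∪ minSet r T := by
  rintro x ⟨hx | hx, hmin⟩
  · exact Or.inl ⟨hx, fun y hy => hmin y (Or.inl hy)⟩
  · exact Or.inr ⟨hx, fun y hy => hmin y (Or.inr hy)⟩

lemma contraction_zc [Fintype Ω] (md : E → Set Ω)
    (h : ∃ c : E → Set Ω → E, IsContraction md c) : ZC md := by
  obtain ⟨c, hc⟩ := h
  have key : ∀ S : Set Ω, ∀ Ψ : E, ∃ Ψ' : E, md Ψ' = md Ψ ∪ S := by
    intro S
    refine Set.Finite.induction_on (motive := fun S _ => ∀ Ψ : E, ∃ Ψ' : E, md Ψ' = md Ψ ∪ S) S (Set.toFinite S) (fun Ψ => ⟨Ψ, by simp⟩) ?_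
    intro a S ha hfin ih Ψ
    obtain ⟨Ψ₁, hΨ₁⟩ := ih Ψ
    by_cases haΨ : a ∈ md Ψ₁
    · refine ⟨Ψ₁, ?_⟩
      rw [hΨ₁, Set.union_insert]
      exact (Set.insert_eq_self.mpr (hΨ₁ ▸ haΨ)).symm
    · -- contract Ψ₁ by {a}ᶜ
      have hsub : md Ψ₁ ⊆ {a}ᶜ := fun x hx hxa => haΨ (by
        simp only [Set.mem_singleton_iff] at hxa; rwa [← hxa])
      have hpost := hc Ψ₁ ({a}ᶜ) ({a}ᶜ)
      have hC1 := hpost.1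
      have hC3 := hpost.2.2.1
      have hC4 := hpost.2.2.2.1
      have hne : ({a}ᶜ : Set Ω) ≠ Set.univ := by
        intro h
        have : a ∈ ({a}ᶜ : Set Ω) := h ▸ Set.mem_univ a
        exact this rfl
      obtain ⟨x, hx, hxa⟩ := Set.not_subset.mp (hC3 hne)
      have hxa' : x = a := by
        by_contra hne'
        exact hxa (by simpa using hne')
      subst hxa'
      refine ⟨c Ψ₁ ({x}ᶜ), ?_⟩
      apply Set.Subset.antisymm
      · intro y hy
        by_cases hyx : y = x
        · subst hyx
          rw [hΨ₁] at *
          exact Or.inr (Set.mem_insert y S)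
        · have : y ∈ md Ψ₁ := hC4 ⟨hy, by simpa using hyx⟩
          rw [hΨ₁] at this
          rcases this with h | h
          · exact Or.inl h
          · exact Or.inr (Set.mem_insert_of_mem x h)
      · intro y hy
        rcases hy with h | h
        · exact hC1 (hΨ₁ ▸ Or.inl h)
        · rcases Set.mem_insert_iff.mp h with rfl | h
          · exact hx
          · exact hC1 (hΨ₁ ▸ Or.inr h)
  intro Ψ M hM
  obtain ⟨Ψ', hΨ'⟩ := key M Ψ
  exact ⟨Ψ', by rw [hΨ', Set.union_eq_self_of_subset_left hM]⟩

lemma zc_fullMeet (md : E → Set Ω) (h : ZC md) :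
    ∃ c : E → Set Ω → E, IsFullMeetContraction md c := by
  classical
  choose f hf using h
  refine ⟨fun Ψ A => if hA : md Ψ ⊆ A then f Ψ (md Ψ ∪ Aᶜ) Set.subset_union_left else Ψ,
    ?_, ?_⟩
  · intro Ψ A B
    have hval : ∀ (C : Set Ω),
        md (if hC : md Ψ ⊆ C then f Ψ (md Ψ ∪ Cᶜ) Set.subset_union_left else Ψ)
          = if md Ψ ⊆ C then md Ψ ∪ Cᶜ else md Ψ := by
      intro C
      by_cases hC : md Ψ ⊆ C
      · rw [dif_pos hC, if_pos hC, hf]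
      · rw [dif_neg hC, if_neg hC]
    simp only [hval]
    refine ⟨?_, ?_, ?_, ?_, ?_, ?_⟩
    · by_cases hA : md Ψ ⊆ A
      · rw [if_pos hA]; exact Set.subset_union_left
      · rw [if_neg hA]
    · intro hA; rw [if_neg hA]
    · intro hAuniv
      by_cases hA : md Ψ ⊆ A
      · rw [if_pos hA]
        have : (Aᶜ : Set Ω).Nonempty := by
          rw [Set.nonempty_compl]; exact hAuniv
        obtain ⟨x, hx⟩ := this
        exact fun hsub => hx (hsub (Or.inr hx))
      · rw [if_neg hA]; exact hA
    · by_cases hA : md Ψ ⊆ A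
      · rw [if_pos hA]
        rintro x ⟨hx | hx, hxA⟩
        · exact hx
        · exact absurd hxA hx
      · rw [if_neg hA]; exact fun x hx => hx.1
    · by_cases hAB : md Ψ ⊆ A ∩ B
      · have hA : md Ψ ⊆ A := hAB.trans Set.inter_subset_left
        have hB : md Ψ ⊆ B := hAB.trans Set.inter_subset_right
        rw [if_pos hAB, if_pos hA, if_pos hB, Set.compl_inter]
        intro x hx
        rcases hx with hx | hx | hx
        · exact Or.inl (Or.inl hx)
        · exact Or.inl (Or.inr hx)
        · exact Or.inr (Or.inr hx)
      · rw [if_neg hAB]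
        by_cases hA : md Ψ ⊆ A
        · rw [if_pos hA]; exact fun x hx => Or.inl (Or.inl hx)
        · rw [if_neg hA]; exact fun x hx => Or.inl hx
    · intro hP
      by_cases hAB : md Ψ ⊆ A ∩ B
      · have hB : md Ψ ⊆ B := hAB.trans Set.inter_subset_right
        rw [if_pos hAB, Set.compl_inter] at *
        rw [if_pos hB]
        rintro x (hx | hx)
        · exact Or.inl hx
        · exact Or.inr (Or.inr hx)
      · rw [if_neg hAB] at hP ⊢
        have hB : ¬ md Ψ ⊆ B := hP
        rw [if_neg hB]
  · intro Ψ A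
    dsimp only
    constructor
    · intro hA; rw [dif_neg hA]
    · intro hA; rw [dif_pos hA, hf]

lemma zc_linear [Fintype Ω] (md : E → Set Ω) (h : ZC md) :
    ∃ c : E → Set Ω → E, IsLinearContraction md c := by
  classical
  letI : LinearOrder Ω := IsWellOrder.linearOrder WellOrderingRel
  set r : Ω → Ω → Prop := fun a b => a ≤ b with hr_def
  have hr : IsLinRel r := ⟨le_total, fun a b => le_antisymm, fun a b c => le_trans⟩
  choose f hf using h
  refine ⟨fun Ψ A => if hA : md Ψ ⊆ A then
      f Ψ (md Ψ ∪ minSet r Aᶜ) Set.subset_union_left else Ψ, ?_, r, hr, ?_⟩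
  · intro Ψ A B
    have hval : ∀ (C : Set Ω),
        md (if hC : md Ψ ⊆ C then f Ψ (md Ψ ∪ minSet r Cᶜ) Set.subset_union_left else Ψ)
          = if md Ψ ⊆ C then md Ψ ∪ minSet r Cᶜ else md Ψ := by
      intro C
      by_cases hC : md Ψ ⊆ C
      · rw [dif_pos hC, if_pos hC, hf]
      · rw [dif_neg hC, if_neg hC]
    simp only [hval]
    refine ⟨?_, ?_, ?_, ?_, ?_, ?_⟩
    · by_cases hA : md Ψ ⊆ A
      · rw [if_pos hA]; exact Set.subset_union_left
      · rw [if_neg hA]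
    · intro hA; rw [if_neg hA]
    · intro hAuniv
      by_cases hA : md Ψ ⊆ A
      · rw [if_pos hA]
        have hcne : (Aᶜ : Set Ω).Nonempty := by
          rw [Set.nonempty_compl]; exact hAuniv
        obtain ⟨x, hx⟩ := minSet_nonempty hr hcne
        exact fun hsub => hx.1 (hsub (Or.inr hx))
      · rw [if_neg hA]; exact hA
    · by_cases hA : md Ψ ⊆ A
      · rw [if_pos hA]
        rintro x ⟨hx | hx, hxA⟩
        · exact hx
        · exact absurd hxA hx.1
      · rw [if_neg hA]; exact fun x hx => hx.1
    · by_cases hAB : md Ψ ⊆ A ∩ B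
      · have hA : md Ψ ⊆ A := hAB.trans Set.inter_subset_left
        have hB : md Ψ ⊆ B := hAB.trans Set.inter_subset_right
        rw [if_pos hAB, if_pos hA, if_pos hB, Set.compl_inter]
        intro x hx
        rcases hx with hx | hx
        · exact Or.inl (Or.inl hx)
        · rcases minSet_union Aᶜ Bᶜ hx with h | h
          · exact Or.inl (Or.inr h)
          · exact Or.inr (Or.inr h)
      · rw [if_neg hAB]
        by_cases hA : md Ψ ⊆ A
        · rw [if_pos hA]; exact fun x hx => Or.inl (Or.inl hx)
        · rw [if_neg hA]; exact fun x hx => Or.inl hx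
    · intro hP
      by_cases hAB : md Ψ ⊆ A ∩ B
      · have hB : md Ψ ⊆ B := hAB.trans Set.inter_subset_right
        rw [if_pos hAB] at hP ⊢
        rw [if_pos hB]
        obtain ⟨x, hx, hxB⟩ := Set.not_subset.mp hP
        have hxmin : x ∈ minSet r (A ∩ B)ᶜ := by
          rcases hx with hx | hx
          · exact absurd (hB hx) hxB
          · exact hx
        rintro y (hy | hy)
        · exact Or.inl hy
        · -- y ∈ minSet r Bᶜ; show y = x
          have hxBc : x ∈ (Bᶜ : Set Ω) := hxB
          have hyABc : y ∈ ((A ∩ B)ᶜ : Set Ω) := by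
            rw [Set.compl_inter]; exact Or.inr hy.1
          have hxy : r x y := hxmin.2 y hyABc
          have hyx : r y x := hy.2 x hxBc
          have : y = x := hr.2.1 y x hyx hxy
          rw [this]
          exact Or.inr hxmin
      · rw [if_neg hAB] at hP ⊢
        rw [if_neg hP]
  · intro Ψ A
    dsimp only
    constructor
    · intro hA; rw [dif_neg hA]
    · intro hA; rw [dif_pos hA, hf]

end Aux

/-- Realizability of AGM contraction, of linear contraction, of
maxichoice contraction and of full meet contraction coincide. -/
theorem contraction_realizability_tfae {Ω E : Type*} [Fintype Ω] [Nonempty Ω] [Nonempty E]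
    (md : E → Set Ω) :
    List.TFAE
      [ (∃ c : E → Set Ω → E, IsContraction md c),
        (∃ c : E → Set Ω → E, IsLinearContraction md c),
        (∃ c : E → Set Ω → E, IsMaxichoiceContraction md c),
        (∃ c : E → Set Ω → E, IsFullMeetContraction md c) ] := by
  tfae_have 2 → 3 := by
    rintro ⟨c, hc, r, hr, h⟩
    exact ⟨c, hc, fun Ψ => ⟨r, hr, fun A => h Ψ A⟩⟩
  tfae_have 3 → 1 := by
    rintro ⟨c, hc, _⟩
    exact ⟨c, hc⟩
  tfae_have 4 → 1 := by
    rintro ⟨c, hc, _⟩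
    exact ⟨c, hc⟩
  tfae_have 1 → 2 := fun h => zc_linear md (contraction_zc md h)
  tfae_have 1 → 4 := fun h => zc_fullMeet md (contraction_zc md h)
  tfae_finish
end

section
/- Let Ω be a nonempty finite type, let E = ⟨𝓔, mod⟩ be an epistemic space over Ω, and let ÷ be an AGM contraction operator for E. Then for every Ψ ∈ 𝓔 and every ω ∈ Ω there exists Ψ' ∈ 𝓔 with mod(Ψ') = mod(Ψ) ∪ {ω}; in fact Ψ' = Ψ ÷ (Ω \ {ω}) has this property. -/
open Set

/-! Contracting by `Ω \ {ω}` must make `ω` a model by (C3), can add no other model by (C4),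
and loses none by (C1). -/

namespace IsContraction

variable {Ω E : Type*} {md : E → Set Ω} {c : E → Set Ω → E}

theorem subset_contract (hc : IsContraction md c) (Ψ : E) (A : Set Ω) :
    md Ψ ⊆ md (c Ψ A) :=
  (hc Ψ A A).1

theorem contract_subset_union_compl (hc : IsContraction md c) (Ψ : E) (A : Set Ω) :
    md (c Ψ A) ⊆ md Ψ ∪ Aᶜ := fun x hx => by
  by_cases hxA : x ∈ A
  · exact Or.inl ((hc Ψ A A).2.2.2.1 ⟨hx, hxA⟩)
  · exact Or.inr hxA

theorem mem_contract_compl_singleton (hc : IsContraction md c) (Ψ : E) (ω : Ω) :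
    ω ∈ md (c Ψ {ω}ᶜ) := by
  have hne : ({ω}ᶜ : Set Ω) ≠ univ := fun h => (h ▸ mem_univ ω : ω ∈ ({ω}ᶜ : Set Ω)) rfl
  by_contra hω
  exact (hc Ψ {ω}ᶜ {ω}ᶜ).2.2.1 hne fun x hx (hxω : x = ω) => hω (hxω ▸ hx)

theorem contract_compl_singleton (hc : IsContraction md c) (Ψ : E) (ω : Ω) :
    md (c Ψ {ω}ᶜ) = md Ψ ∪ {ω} :=
  (compl_compl ({ω} : Set Ω) ▸ hc.contract_subset_union_compl Ψ {ω}ᶜ).antisymm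
    (union_subset (hc.subset_contract Ψ _)
      (singleton_subset_iff.2 (hc.mem_contract_compl_singleton Ψ ω)))

end IsContraction

theorem exists_state_insert_of_contraction_general {Ω E : Type*}
    (md : E → Set Ω)
    (c : E → Set Ω → E) (hc : IsContraction md c) (Ψ : E) (ω : Ω) :
    (∃ Ψ' : E, md Ψ' = md Ψ ∪ {ω}) ∧ md (c Ψ ({ω}ᶜ)) = md Ψ ∪ {ω} :=
  have h := hc.contract_compl_singleton Ψ ω
  ⟨⟨c Ψ {ω}ᶜ, h⟩, h⟩

/-- For an AGM contraction operator `c`, for every state `Ψ` and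
world `ω` there is a state whose models are `md Ψ ∪ {ω}`; in fact
`c Ψ (Ω \ {ω})` is such a state. -/
theorem exists_state_insert_of_contraction {Ω E : Type*} [Fintype Ω] [Nonempty Ω] [Nonempty E]
    (md : E → Set Ω)
    (c : E → Set Ω → E) (hc : IsContraction md c) (Ψ : E) (ω : Ω) :
    (∃ Ψ' : E, md Ψ' = md Ψ ∪ {ω}) ∧ md (c Ψ ({ω}ᶜ)) = md Ψ ∪ {ω} :=
  exists_state_insert_of_contraction_general md c hc Ψ ω
end

section
/- Let Ω be a nonempty finite type and let E = ⟨𝓔, mod⟩ be an epistemic space over Ω. If E satisfies both (ZR1) and (ZR2), then there exists a linear revision operator for E. -/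
open Set

/-!
Well-order `Ω` and revise `Ψ` by `A` to `mod Ψ ∩ A` when this is nonempty, and otherwise to the
set of least models of `A`, which has at most one element. Every such model set is realised by an
epistemic state: `mod Ψ ∩ A` and `∅` are subsets of `mod Ψ` (ZR2), and a singleton is covered by
(ZR1). The postulates R1–R6 for this choice of model sets only use that the order is linear and
that nonempty sets have least elements.
-/

section MinSet

variable {Ω : Type*} {r : Ω → Ω → Prop} {A B : Set Ω}

theorem minSet_subset : minSet r A ⊆ A := fun _ h => h.1

theorem minSet_inter_subset_minSet_inter : minSet r A ∩ B ⊆ minSet r (A ∩ B) :=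
  fun _ ⟨⟨hA, hmin⟩, hB⟩ => ⟨⟨hA, hB⟩, fun _ h => hmin _ h.1⟩

theorem minSet_inter_subset_of_nonempty [IsTrans Ω r] (h : (minSet r A ∩ B).Nonempty) :
    minSet r (A ∩ B) ⊆ minSet r A ∩ B := by
  obtain ⟨ω, ⟨hωA, hωmin⟩, hωB⟩ := h
  rintro x ⟨⟨hxA, hxB⟩, hxmin⟩
  exact ⟨⟨hxA, fun y hy => _root_.trans (hxmin ω ⟨hωA, hωB⟩) (hωmin y hy)⟩, hxB⟩

end MinSet

section LinearOrder

variable {Ω : Type*} [LinearOrder Ω] {A : Set Ω}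

theorem isLinRel_le : IsLinRel (· ≤ · : Ω → Ω → Prop) :=
  ⟨le_total, fun _ _ => le_antisymm, fun _ _ _ => le_trans⟩

theorem minSet_le_subsingleton : (minSet (· ≤ ·) A).Subsingleton :=
  fun _ ha _ hb => le_antisymm (ha.2 _ hb.1) (hb.2 _ ha.1)

theorem minSet_le_nonempty [WellFoundedLT Ω] (hA : A.Nonempty) :
    (minSet (· ≤ ·) A).Nonempty :=
  ⟨wellFounded_lt.min A hA, wellFounded_lt.min_mem A hA, fun _ => wellFounded_lt.min_le⟩

end LinearOrder

section LinearRevisionModels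

variable {Ω : Type*} {r : Ω → Ω → Prop} {M A B : Set Ω}

/-- The model set of `Ψ ★ A` for the linear revision operator based on `r`, where `M = mod Ψ`. -/
def linearRevisionModels (r : Ω → Ω → Prop) (M A : Set Ω) : Set Ω :=
  if M ∩ A = ∅ then minSet r A else M ∩ A

theorem linearRevisionModels_of_inter_eq_empty (h : M ∩ A = ∅) :
    linearRevisionModels r M A = minSet r A :=
  if_pos h

theorem linearRevisionModels_of_inter_ne_empty (h : M ∩ A ≠ ∅) :
    linearRevisionModels r M A = M ∩ A :=
  if_neg h

theorem linearRevisionModels_subset : linearRevisionModels r M A ⊆ A := by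
  unfold linearRevisionModels
  split_ifs
  exacts [minSet_subset, inter_subset_right]

theorem linearRevisionModels_ne_empty [LinearOrder Ω] [WellFoundedLT Ω] (hA : A ≠ ∅) :
    linearRevisionModels (· ≤ ·) M A ≠ ∅ := by
  unfold linearRevisionModels
  split_ifs with h
  exacts [(minSet_le_nonempty (nonempty_iff_ne_empty.2 hA)).ne_empty, h]

theorem inter_inter_eq_empty_of_inter_eq_empty (h : M ∩ A = ∅) : M ∩ (A ∩ B) = ∅ :=
  subset_empty_iff.1 (h ▸ inter_subset_inter_right M inter_subset_left)

theorem linearRevisionModels_inter_subset :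
    linearRevisionModels r M A ∩ B ⊆ linearRevisionModels r M (A ∩ B) := by
  by_cases hA : M ∩ A = ∅
  · rw [linearRevisionModels_of_inter_eq_empty hA,
      linearRevisionModels_of_inter_eq_empty (inter_inter_eq_empty_of_inter_eq_empty hA)]
    exact minSet_inter_subset_minSet_inter
  · rw [linearRevisionModels_of_inter_ne_empty hA, inter_assoc]
    by_cases hAB : M ∩ (A ∩ B) = ∅
    · simp [hAB]
    · rw [linearRevisionModels_of_inter_ne_empty hAB]

theorem linearRevisionModels_inter_subset_of_ne_empty [IsTrans Ω r]
    (h : linearRevisionModels r M A ∩ B ≠ ∅) :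
    linearRevisionModels r M (A ∩ B) ⊆ linearRevisionModels r M A ∩ B := by
  by_cases hA : M ∩ A = ∅
  · rw [linearRevisionModels_of_inter_eq_empty hA] at h ⊢
    rw [linearRevisionModels_of_inter_eq_empty (inter_inter_eq_empty_of_inter_eq_empty hA)]
    exact minSet_inter_subset_of_nonempty (nonempty_iff_ne_empty.2 h)
  · rw [linearRevisionModels_of_inter_ne_empty hA, inter_assoc] at h ⊢
    rw [linearRevisionModels_of_inter_ne_empty h]

end LinearRevisionModels

section EpistemicSpace

variable {Ω E : Type*} [LinearOrder Ω] {md : E → Set Ω}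

theorem isLinearRevision_of_models_eq [WellFoundedLT Ω] {s : E → Set Ω → E}
    (hs : ∀ Ψ A, md (s Ψ A) = linearRevisionModels (· ≤ ·) (md Ψ) A) :
    IsLinearRevision md s := by
  refine ⟨fun Ψ A B => ?_, (· ≤ ·), isLinRel_le, fun Ψ A => ?_⟩ <;> simp only [hs]
  · exact ⟨linearRevisionModels_subset, linearRevisionModels_of_inter_ne_empty,
      linearRevisionModels_ne_empty, linearRevisionModels_inter_subset,
      linearRevisionModels_inter_subset_of_ne_empty⟩
  · exact ⟨linearRevisionModels_of_inter_ne_empty, linearRevisionModels_of_inter_eq_empty⟩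

theorem exists_models_eq_linearRevisionModels (h1 : ZR1 md) (h2 : ZR2 md) (Ψ : E) (A : Set Ω) :
    ∃ Ψ', md Ψ' = linearRevisionModels (· ≤ ·) (md Ψ) A := by
  by_cases h : md Ψ ∩ A = ∅
  · rw [linearRevisionModels_of_inter_eq_empty h]
    obtain hempty | ⟨ω, hω⟩ := (minSet_le_subsingleton (A := A)).eq_empty_or_singleton
    · rw [hempty]
      exact h2 Ψ ∅ (empty_subset _)
    · rw [hω]
      exact h1 ω
  · rw [linearRevisionModels_of_inter_ne_empty h]
    exact h2 Ψ _ inter_subset_left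

end EpistemicSpace

theorem exists_linearRevision_of_ZR1_ZR2_general {Ω E : Type*}
    (md : E → Set Ω)
    (h1 : ZR1 md) (h2 : ZR2 md) :
    ∃ s : E → Set Ω → E, IsLinearRevision md s := by
  obtain ⟨_, _⟩ := exists_wellFoundedLT Ω
  choose s hs using exists_models_eq_linearRevisionModels h1 h2
  exact ⟨s, isLinearRevision_of_models_eq hs⟩

/-- If `⟨E, md⟩` satisfies (ZR1) and (ZR2), then there exists a
linear revision operator for `⟨E, md⟩`. -/
theorem exists_linearRevision_of_ZR1_ZR2 {Ω E : Type*} [Fintype Ω] [Nonempty Ω] [Nonempty E]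
    (md : E → Set Ω)
    (h1 : ZR1 md) (h2 : ZR2 md) :
    ∃ s : E → Set Ω → E, IsLinearRevision md s :=
  exists_linearRevision_of_ZR1_ZR2_general md h1 h2
end

section
/- Let Ω be a nonempty finite type, let E = ⟨𝓔, mod⟩ be an epistemic space over Ω, and let ★ be an AGM revision operator for E. Then E satisfies (ZR2): for every Ψ ∈ 𝓔 and every M ⊆ mod(Ψ) there exists Ψ_M ∈ 𝓔 with mod(Ψ_M) = M. -/
open Set

theorem IsRevision.md_eq_of_subset {Ω E : Type*} {md : E → Set Ω} {s : E → Set Ω → E}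
    (hs : IsRevision md s) {Ψ : E} {M : Set Ω} (hM : M ⊆ md Ψ) : md (s Ψ M) = M := by
  rcases eq_or_ne M ∅ with rfl | hne
  · exact subset_empty_iff.mp (hs Ψ ∅ ∅).1
  · have hR2 := (hs Ψ M M).2.1
    rw [inter_eq_self_of_subset_right hM] at hR2
    exact hR2 hne

theorem ZR2_of_revision_general {Ω E : Type*}
    (md : E → Set Ω)
    (s : E → Set Ω → E) (hs : IsRevision md s) :
    ZR2 md :=
  fun Ψ _ hM => ⟨s Ψ _, hs.md_eq_of_subset hM⟩

/-- Every epistemic space admitting an AGM revision operator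
satisfies (ZR2). -/
theorem ZR2_of_revision {Ω E : Type*} [Fintype Ω] [Nonempty Ω] [Nonempty E]
    (md : E → Set Ω)
    (s : E → Set Ω → E) (hs : IsRevision md s) :
    ZR2 md :=
  ZR2_of_revision_general md s hs
end

section
/- Let Ω be a nonempty finite type and let E = ⟨𝓔, mod⟩ be an epistemic space over Ω. Then there exists a full meet revision operator for E if and only if E satisfies (Unbiased): for every M ⊆ Ω there exists Ψ_M ∈ 𝓔 with mod(Ψ_M) = M. -/
open Set

section FullMeet

variable {Ω E : Type*}

def fullMeet (K A : Set Ω) : Set Ω :=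
  if K ∩ A = ∅ then A else K ∩ A

theorem fullMeet_of_inter_eq_empty {K A : Set Ω} (h : K ∩ A = ∅) : fullMeet K A = A :=
  if_pos h

theorem fullMeet_of_inter_ne_empty {K A : Set Ω} (h : K ∩ A ≠ ∅) : fullMeet K A = K ∩ A :=
  if_neg h

theorem fullMeet_subset (K A : Set Ω) : fullMeet K A ⊆ A := by
  by_cases h : K ∩ A = ∅
  · rw [fullMeet_of_inter_eq_empty h]
  · rw [fullMeet_of_inter_ne_empty h]
    exact inter_subset_right

theorem fullMeet_ne_empty {K A : Set Ω} (hA : A ≠ ∅) : fullMeet K A ≠ ∅ := by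
  by_cases h : K ∩ A = ∅
  · rwa [fullMeet_of_inter_eq_empty h]
  · rwa [fullMeet_of_inter_ne_empty h]

theorem fullMeet_inter_eq {K A B : Set Ω} (h : fullMeet K A ∩ B ≠ ∅) :
    fullMeet K (A ∩ B) = fullMeet K A ∩ B := by
  by_cases hA : K ∩ A = ∅
  · have hAB : K ∩ (A ∩ B) = ∅ := by
      rw [← inter_assoc, hA, empty_inter]
    rw [fullMeet_of_inter_eq_empty hA, fullMeet_of_inter_eq_empty hAB]
  · rw [fullMeet_of_inter_ne_empty hA] at h ⊢
    rw [inter_assoc] at h ⊢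
    exact fullMeet_of_inter_ne_empty h

theorem fullMeet_inter_subset (K A B : Set Ω) : fullMeet K A ∩ B ⊆ fullMeet K (A ∩ B) := by
  by_cases h : fullMeet K A ∩ B = ∅
  · simp only [h, empty_subset]
  · exact (fullMeet_inter_eq h).ge

theorem isFullMeetRevision_of_md_eq_fullMeet {md : E → Set Ω} {s : E → Set Ω → E}
    (hs : ∀ Ψ A, md (s Ψ A) = fullMeet (md Ψ) A) : IsFullMeetRevision md s := by
  simp only [IsFullMeetRevision, IsRevision, hs]
  refine ⟨fun Ψ A B => ⟨fullMeet_subset _ _, fullMeet_of_inter_ne_empty, fullMeet_ne_empty,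
    fullMeet_inter_subset _ _ _, fun h => (fullMeet_inter_eq h).le⟩,
    fun Ψ A => ⟨fullMeet_of_inter_ne_empty, fullMeet_of_inter_eq_empty⟩⟩

theorem Unbiased.exists_isFullMeetRevision {md : E → Set Ω} (hU : Unbiased md) :
    ∃ s : E → Set Ω → E, IsFullMeetRevision md s := by
  choose state h_state using hU
  exact ⟨fun Ψ A => state (fullMeet (md Ψ) A),
    isFullMeetRevision_of_md_eq_fullMeet fun Ψ A => h_state _⟩

/-- Revising any state by `∅` yields a state with no models, and revising that state by `M`
yields one whose models are exactly `M`. -/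
theorem IsFullMeetRevision.unbiased [Nonempty E] {md : E → Set Ω} {s : E → Set Ω → E}
    (hs : IsFullMeetRevision md s) : Unbiased md := by
  have revise_inconsistent {Ψ : E} (hΨ : md Ψ = ∅) (M : Set Ω) : md (s Ψ M) = M :=
    (hs.2 Ψ M).2 (by rw [hΨ, empty_inter])
  obtain ⟨Ψ⟩ := ‹Nonempty E›
  have h_bot : md (s Ψ ∅) = ∅ := (hs.2 Ψ ∅).2 (inter_empty _)
  exact fun M => ⟨s (s Ψ ∅) M, revise_inconsistent h_bot M⟩

end FullMeet

theorem fullMeetRevision_iff_unbiased_general {Ω E : Type*} [Nonempty E]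
    (md : E → Set Ω) :
    (∃ s : E → Set Ω → E, IsFullMeetRevision md s) ↔ Unbiased md :=
  ⟨fun ⟨_, hs⟩ => hs.unbiased, Unbiased.exists_isFullMeetRevision⟩

/-- There exists a full meet revision operator for `⟨E, md⟩`
iff `⟨E, md⟩` satisfies (Unbiased). -/
theorem fullMeetRevision_iff_unbiased {Ω E : Type*} [Fintype Ω] [Nonempty Ω] [Nonempty E]
    (md : E → Set Ω) :
    (∃ s : E → Set Ω → E, IsFullMeetRevision md s) ↔ Unbiased md :=
  fullMeetRevision_iff_unbiased_general md
end

section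
/- For the epistemic space E¹ = ⟨𝓔₁, mod⟩: AGM revision is not realizable in E¹, but AGM contraction is realizable in E¹. -/
open Set

/-- The epistemic space `E¹` over `Ω₁ = Fin 2` (worlds `ω₁, ω₂`): three states
`Ψ₁, Ψ₂, Ψ_⊤` with `mod Ψ₁ = {ω₁}`, `mod Ψ₂ = {ω₂}` and `mod Ψ_⊤ = Ω₁`. -/
def md1 : Fin 3 → Set (Fin 2) := ![{0}, {1}, Set.univ]

/-! Every state of `E¹` is consistent, so no state can be the revision of a state by `∅`,
which (R1) forces to have no models. Contraction, in contrast, only ever weakens a state: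
full meet contraction (`mod (Ψ ÷ A) = mod Ψ ∪ Aᶜ` when `mod Ψ ⊆ A`, and `Ψ` otherwise) satisfies
the contraction postulates and is realizable as soon as every superset of a model set is a model set (ZC),
which holds in `E¹`. -/

section

variable {Ω E : Type*} {md : E → Set Ω}

theorem not_isRevision_of_forall_nonempty [Nonempty E] (h : ∀ Ψ, (md Ψ).Nonempty)
    (s : E → Set Ω → E) : ¬ IsRevision md s := by
  intro hs
  obtain ⟨Ψ⟩ := ‹Nonempty E›
  exact (h (s Ψ ∅)).ne_empty (subset_empty_iff.mp (hs Ψ ∅ ∅).1)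

theorem isContraction_of_fullMeet {c : E → Set Ω → E}
    (hc : ∀ Ψ A, (¬ md Ψ ⊆ A → md (c Ψ A) = md Ψ) ∧ (md Ψ ⊆ A → md (c Ψ A) = md Ψ ∪ Aᶜ)) :
    IsContraction md c := by
  classical
  intro Ψ A B
  have hmod : ∀ X, md (c Ψ X) = if md Ψ ⊆ X then md Ψ ∪ Xᶜ else md Ψ := fun X => by
    split_ifs with hX
    exacts [(hc Ψ X).2 hX, (hc Ψ X).1 hX]
  simp only [hmod, subset_inter_iff]
  refine ⟨?C1, ?C2, ?C3, ?C4, ?C6, ?C7⟩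
  case C1 => split_ifs <;> simp
  case C2 => intro h; simp [h]
  case C3 =>
    intro hA
    split_ifs with h
    · exact fun h' => hA (compl_le_self.mp (subset_union_right.trans h'))
    · exact h
  case C4 =>
    split_ifs
    · exact fun x ⟨hx, hxA⟩ => hx.resolve_right (not_not_intro hxA)
    · exact inter_subset_left
  case C6 => split_ifs <;> intro x <;> simp_all; tauto
  case C7 => split_ifs <;> intro h x <;> simp_all; tauto

theorem exists_isFullMeetContraction_of_zc (h : ZC md) : ∃ c, IsFullMeetContraction md c := by
  classical
  let c : E → Set Ω → E := fun Ψ A =>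
    if hA : md Ψ ⊆ A then (h Ψ (md Ψ ∪ Aᶜ) subset_union_left).choose else Ψ
  have hc : ∀ Ψ A, (¬ md Ψ ⊆ A → md (c Ψ A) = md Ψ) ∧ (md Ψ ⊆ A → md (c Ψ A) = md Ψ ∪ Aᶜ) :=
    fun Ψ A => ⟨fun hA => by simp [c, hA],
      fun hA => by simpa [c, hA] using (h Ψ _ subset_union_left).choose_spec⟩
  exact ⟨c, isContraction_of_fullMeet hc, hc⟩

end

theorem md1_nonempty (Ψ : Fin 3) : (md1 Ψ).Nonempty := by
  fin_cases Ψ <;> simp [md1]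

-- A proper superset of a nonempty subset of `Fin 2` is that subset itself.
theorem zc_md1 : ZC md1 := by
  intro Ψ M hM
  by_cases hu : M = univ
  · exact ⟨2, hu ▸ rfl⟩
  · refine ⟨Ψ, ?_⟩
    ext x
    fin_cases Ψ <;> fin_cases x <;> simp_all [md1, eq_univ_iff_forall, Fin.forall_fin_two]

/-- AGM revision is not realizable in `E¹`, but AGM contraction
is realizable in `E¹`. -/
theorem E1_no_revision_but_contraction :
    (¬ ∃ s : Fin 3 → Set (Fin 2) → Fin 3, IsRevision md1 s) ∧
      (∃ c : Fin 3 → Set (Fin 2) → Fin 3, IsContraction md1 c) :=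
  ⟨fun ⟨s, hs⟩ => not_isRevision_of_forall_nonempty md1_nonempty s hs,
    (exists_isFullMeetContraction_of_zc zc_md1).imp fun _ hc => hc.1⟩
end
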